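/- Let M : ℝ → ℝ be measurable, nonnegative, supported on [E₀,∞), of polynomial growth, and not a.e. zero, and fix μ ∈ ℝ. Then Y(β) = ∫ f(E,β,μ)(E−μ) M(E) dE defines a continuous function of β on (0,∞) which is monotone (strictly decreasing if M is positive on a set of positive measure where E ≠ μ); hence Y is injective on (0,∞). -/

import Mathlib

/-!
For `x = E - μ ≠ 0` the map `β ↦ x / (1 + exp (β x))` is strictly decreasing (for `x > 0` the
denominator grows, for `x < 0` it shrinks while the numerator is negative), so integrating
against `M ≥ 0` gives a decreasing `Y`, strictly so as soon as `M > 0` on a non-null set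
avoiding `μ`. For `β ≥ b > 0` the integrand is dominated, uniformly in `β`, by
`(1 + |E|) ^ (η + 1) * exp (-b E)` on `(E₀, ∞)`, which is integrable; dominated convergence on
each `[b, ∞)` gives continuity.
-/

open MeasureTheory Set

/-- The Fermi–Dirac distribution `f(E,β,μ) = (1 + exp(β(E-μ)))⁻¹`. -/
noncomputable def fermi (β μ E : ℝ) : ℝ := (1 + Real.exp (β * (E - μ)))⁻¹

open Filter Asymptotics Real

lemma integral_lt_integral_of_le_of_measure_setOf_lt_ne_zero {α : Type*} [MeasurableSpace α]
    {ν : Measure α} {f g : α → ℝ} (hf : Integrable f ν) (hg : Integrable g ν)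
    (hle : ∀ x, f x ≤ g x) (hlt : ν {x | f x < g x} ≠ 0) : ∫ x, f x ∂ν < ∫ x, g x ∂ν := by
  rw [← sub_pos, ← integral_sub hg hf, integral_pos_iff_support_of_nonneg
    (fun x => sub_nonneg.2 (hle x)) (hg.sub hf), pos_iff_ne_zero]
  convert hlt using 2
  ext x
  simp [sub_ne_zero, (hle x).lt_iff_ne, ne_comm]

lemma one_add_abs_rpow_mul_exp_neg_isBigO (s : ℝ) {b : ℝ} (hb : 0 < b) :
    (fun x => (1 + |x|) ^ s * exp (-b * x)) =O[atTop] fun x => exp (-(b / 2) * x) := by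
  have hpow : (fun x : ℝ => (1 + |x|) ^ s) =O[atTop] fun x => exp (b / 2 * x) := by
    have hlim : Tendsto (fun x : ℝ => 1 + |x|) atTop atTop :=
      tendsto_atTop_add_const_left _ _ tendsto_abs_atTop_atTop
    refine ((isLittleO_rpow_exp_pos_mul_atTop s (half_pos hb)).comp_tendsto hlim).isBigO.trans ?_
    refine IsBigO.of_bound (exp (b / 2)) ?_
    filter_upwards [eventually_ge_atTop 0] with x hx
    simp only [Function.comp, norm_eq_abs, abs_exp, ← exp_add, abs_of_nonneg hx]
    exact exp_le_exp.2 (by linarith)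
  refine (hpow.mul (isBigO_refl (fun x => exp (-b * x)) atTop)).congr_right fun x => ?_
  rw [← exp_add]; ring_nf

lemma integrableOn_one_add_abs_rpow_mul_exp_neg (s a : ℝ) {b : ℝ} (hb : 0 < b) :
    IntegrableOn (fun x => (1 + |x|) ^ s * exp (-b * x)) (Ioi a) :=
  have hcont : Continuous fun x : ℝ => (1 + |x|) ^ s * exp (-b * x) :=
    ((continuous_const.add continuous_abs).rpow_const fun x =>
      Or.inl (by positivity : (1 : ℝ) + |x| ≠ 0)).mul (by fun_prop)
  integrable_of_isBigO_exp_neg (half_pos hb) hcont.continuousOn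
    (one_add_abs_rpow_mul_exp_neg_isBigO s hb)

lemma fermi_pos (β μ E : ℝ) : 0 < fermi β μ E := by
  unfold fermi; positivity

lemma strictAnti_inv_one_add_exp : StrictAnti fun t : ℝ => (1 + exp t)⁻¹ :=
  fun _ _ h => inv_strictAnti₀ (by positivity) (by simpa using exp_lt_exp.2 h)

lemma strictAnti_fermi_mul_sub {μ E : ℝ} (hE : E ≠ μ) :
    StrictAnti fun β => fermi β μ E * (E - μ) := by
  intro β₁ β₂ h
  rcases hE.lt_or_gt with hlt | hgt
  · have hx : E - μ < 0 := sub_neg.2 hlt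
    refine mul_lt_mul_of_neg_right ?_ hx
    exact strictAnti_inv_one_add_exp (mul_lt_mul_of_neg_right h hx)
  · have hx : 0 < E - μ := sub_pos.2 hgt
    refine mul_lt_mul_of_pos_right ?_ hx
    exact strictAnti_inv_one_add_exp (mul_lt_mul_of_pos_right h hx)

lemma antitone_fermi_mul_sub (μ E : ℝ) : Antitone fun β => fermi β μ E * (E - μ) := by
  rcases eq_or_ne E μ with rfl | hE
  · simp [antitone_const]
  · exact (strictAnti_fermi_mul_sub hE).antitone

lemma fermi_le_exp_neg_mul {b β : ℝ} (hb : 0 ≤ b) (hbβ : b ≤ β) (μ E : ℝ) :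
    fermi β μ E ≤ exp (-(b * (E - μ))) := by
  rcases le_total E μ with h | h
  · have hf : fermi β μ E ≤ 1 := inv_le_one_of_one_le₀ (by linarith [exp_pos (β * (E - μ))])
    exact hf.trans (one_le_exp (by nlinarith))
  · calc fermi β μ E ≤ (exp (β * (E - μ)))⁻¹ := inv_anti₀ (exp_pos _) (by linarith)
      _ = exp (-(β * (E - μ))) := (exp_neg _).symm
      _ ≤ exp (-(b * (E - μ))) := exp_le_exp.2 (by nlinarith)

@[fun_prop]
lemma Continuous.fermi {X : Type*} [TopologicalSpace X] {β μ E : X → ℝ} (hβ : Continuous β)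
    (hμ : Continuous μ) (hE : Continuous E) : Continuous fun x => fermi (β x) (μ x) (E x) :=
  Continuous.inv₀ (by fun_prop) fun x => by positivity

lemma fermi_mul_abs_sub_le {b β : ℝ} (hb : 0 ≤ b) (hbβ : b ≤ β) (μ E : ℝ) :
    fermi β μ E * |E - μ| ≤ (1 + |μ|) * exp (b * μ) * ((1 + |E|) * exp (-b * E)) := by
  have habs : |E - μ| ≤ (1 + |μ|) * (1 + |E|) := by
    nlinarith [abs_sub E μ, abs_nonneg E, abs_nonneg μ]
  calc fermi β μ E * |E - μ| ≤ exp (-(b * (E - μ))) * ((1 + |μ|) * (1 + |E|)) :=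
        mul_le_mul (fermi_le_exp_neg_mul hb hbβ μ E) habs (abs_nonneg _) (exp_pos _).le
    _ = _ := by rw [show -(b * (E - μ)) = b * μ + -b * E by ring, exp_add]; ring

noncomputable def fermiBound (μ E₀ C η b : ℝ) : ℝ → ℝ :=
  (Ioi E₀).indicator fun E => C * (1 + |μ|) * exp (b * μ) * ((1 + |E|) ^ (η + 1) * exp (-b * E))

lemma integrable_fermiBound (μ E₀ C η : ℝ) {b : ℝ} (hb : 0 < b) :
    Integrable (fermiBound μ E₀ C η b) :=
  (integrable_indicator_iff measurableSet_Ioi).2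
    ((integrableOn_one_add_abs_rpow_mul_exp_neg (η + 1) E₀ hb).const_mul _)

section Integrand

variable {μ E₀ C η : ℝ} {M : ℝ → ℝ}

lemma norm_fermi_mul_sub_mul_le_fermiBound (hMnn : ∀ E, 0 ≤ M E) (hA : ∀ E ≤ E₀, M E = 0)
    (hB : ∀ E, M E ≤ C * (1 + |E|) ^ η) {b β : ℝ} (hb : 0 ≤ b) (hbβ : b ≤ β) (E : ℝ) :
    ‖fermi β μ E * (E - μ) * M E‖ ≤ fermiBound μ E₀ C η b E := by
  by_cases hE : E ∈ Ioi E₀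
  · rw [fermiBound, indicator_of_mem hE, norm_mul, norm_mul, norm_of_nonneg (fermi_pos β μ E).le,
      norm_eq_abs (E - μ), norm_of_nonneg (hMnn E)]
    calc fermi β μ E * |E - μ| * M E
        ≤ (1 + |μ|) * exp (b * μ) * ((1 + |E|) * exp (-b * E)) * (C * (1 + |E|) ^ η) :=
          mul_le_mul (fermi_mul_abs_sub_le hb hbβ μ E) (hB E) (hMnn E) (by positivity)
      _ = _ := by rw [rpow_add_one (by positivity : (1 : ℝ) + |E| ≠ 0)]; ring
  · rw [fermiBound, indicator_of_notMem hE, hA E (not_lt.1 hE)]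
    simp

lemma integrable_fermi_mul_sub_mul (hMmeas : Measurable M) (hMnn : ∀ E, 0 ≤ M E)
    (hA : ∀ E ≤ E₀, M E = 0) (hB : ∀ E, M E ≤ C * (1 + |E|) ^ η) {β : ℝ} (hβ : 0 < β) :
    Integrable fun E => fermi β μ E * (E - μ) * M E :=
  (integrable_fermiBound μ E₀ C η hβ).mono'
    (by fun_prop) (.of_forall (norm_fermi_mul_sub_mul_le_fermiBound hMnn hA hB hβ.le le_rfl))

lemma continuousOn_integral_fermi_mul_sub_mul (hMmeas : Measurable M) (hMnn : ∀ E, 0 ≤ M E)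
    (hA : ∀ E ≤ E₀, M E = 0) (hB : ∀ E, M E ≤ C * (1 + |E|) ^ η) :
    ContinuousOn (fun β => ∫ E, fermi β μ E * (E - μ) * M E) (Ioi 0) := by
  intro β₀ hβ₀
  have hb : 0 < β₀ / 2 := half_pos hβ₀
  have hloc : ContinuousOn (fun β => ∫ E, fermi β μ E * (E - μ) * M E) (Ici (β₀ / 2)) :=
    continuousOn_of_dominated (fun _ _ => by fun_prop)
      (fun _ hβ => .of_forall (norm_fermi_mul_sub_mul_le_fermiBound hMnn hA hB hb.le hβ))
      (integrable_fermiBound μ E₀ C η hb) (.of_forall fun E => by fun_prop)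
  exact (hloc.continuousAt (Ici_mem_nhds (half_lt_self hβ₀))).continuousWithinAt

end Integrand

theorem Y_continuous_antitone_injective_general
    (μ E₀ C η : ℝ) (M : ℝ → ℝ)
    (hMmeas : Measurable M) (hMnn : ∀ E, 0 ≤ M E)
    (hA : ∀ E ≤ E₀, M E = 0)
    (hB : ∀ E, M E ≤ C * (1 + |E|) ^ η) :
    ContinuousOn (fun β => ∫ E, fermi β μ E * (E - μ) * M E) (Set.Ioi (0 : ℝ)) ∧
    AntitoneOn (fun β => ∫ E, fermi β μ E * (E - μ) * M E) (Set.Ioi (0 : ℝ)) ∧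
    (volume {E : ℝ | 0 < M E ∧ E ≠ μ} ≠ 0 →
      StrictAntiOn (fun β => ∫ E, fermi β μ E * (E - μ) * M E) (Set.Ioi (0 : ℝ)) ∧
      Set.InjOn (fun β => ∫ E, fermi β μ E * (E - μ) * M E) (Set.Ioi (0 : ℝ))) := by
  have hint {β : ℝ} (hβ : β ∈ Ioi (0 : ℝ)) : Integrable fun E => fermi β μ E * (E - μ) * M E :=
    integrable_fermi_mul_sub_mul hMmeas hMnn hA hB hβ
  refine ⟨continuousOn_integral_fermi_mul_sub_mul hMmeas hMnn hA hB,
    fun β₁ h₁ β₂ h₂ h => integral_mono (hint h₂) (hint h₁) fun E =>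
      mul_le_mul_of_nonneg_right (antitone_fermi_mul_sub μ E h) (hMnn E), fun hpos => ?_⟩
  have hstrict : StrictAntiOn (fun β => ∫ E, fermi β μ E * (E - μ) * M E) (Ioi 0) := by
    intro β₁ h₁ β₂ h₂ h
    refine integral_lt_integral_of_le_of_measure_setOf_lt_ne_zero (hint h₂) (hint h₁)
      (fun E => mul_le_mul_of_nonneg_right (antitone_fermi_mul_sub μ E h.le) (hMnn E))
      fun hnull => hpos (measure_mono_null (fun E hE => ?_) hnull)
    exact mul_lt_mul_of_pos_right (strictAnti_fermi_mul_sub hE.2 h) hE.1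
  exact ⟨hstrict, hstrict.injOn⟩

theorem Y_continuous_antitone_injective
    (μ E₀ C η : ℝ) (M : ℝ → ℝ)
    (hMmeas : Measurable M) (hMnn : ∀ E, 0 ≤ M E)
    (hMnz : ¬ (∀ᵐ E ∂volume, M E = 0))
    (hA : ∀ E ≤ E₀, M E = 0)
    (hB : ∀ E, M E ≤ C * (1 + |E|) ^ η) :
    ContinuousOn (fun β => ∫ E, fermi β μ E * (E - μ) * M E) (Set.Ioi (0 : ℝ)) ∧
    AntitoneOn (fun β => ∫ E, fermi β μ E * (E - μ) * M E) (Set.Ioi (0 : ℝ)) ∧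
    (volume {E : ℝ | 0 < M E ∧ E ≠ μ} ≠ 0 →
      StrictAntiOn (fun β => ∫ E, fermi β μ E * (E - μ) * M E) (Set.Ioi (0 : ℝ)) ∧
      Set.InjOn (fun β => ∫ E, fermi β μ E * (E - μ) * M E) (Set.Ioi (0 : ℝ))) :=
  Y_continuous_antitone_injective_general μ E₀ C η M hMmeas hMnn hA hB
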